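/- For a densely defined symmetric positive-definite operator T₀ (⟨T₀u,u⟩ ≥ ‖u‖² for u ∈ D(T₀)) on a real Hilbert space H, the Friedrichs extension S: D(S) ⊆ H → H is a self-adjoint bijective extension of T₀. -/

import Mathlib

/-!
Let `V` be the completion of `D(T₀)` for the energy norm and `j : V → H` the induced contraction.
The bounded operator `A = j j†` is symmetric, and injective because `j` has dense range. Since
`⟪j† (T₀ u), v⟫_V = ⟪T₀ u, j v⟫ = ⟪u, v⟫_V` on `D(T₀)`, we get `A (T₀ u) = u`, so the inverse
`S = A⁻¹ : range A → H` extends `T₀`. The inverse of an injective symmetric everywhere defined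
operator is self-adjoint. Unwinding `u = j (j† f)` with `⟪j† f, v⟫_V = ⟪f, j v⟫` for all `v ∈ V`,
this `S` is the operator of the Friedrichs construction.
-/

open scoped RealInnerProductSpace InnerProductSpace
open Function UniformSpace

namespace LinearMap

section InversePMap

variable {R E F : Type*} [Ring R] [AddCommGroup E] [Module R E] [AddCommGroup F] [Module R F]
  (A : E →ₗ[R] F) (hA : Injective A)

noncomputable def inversePMap : F →ₗ.[R] E :=
  ⟨range A, (LinearEquiv.ofInjective A hA).symm.toLinearMap⟩

theorem apply_inversePMap (y : (A.inversePMap hA).domain) : A (A.inversePMap hA y) = y :=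
  LinearEquiv.ofInjective_symm_apply A y

theorem inversePMap_apply {y : (A.inversePMap hA).domain} {x : E} (hxy : A x = y) :
    A.inversePMap hA y = x :=
  hA (by rw [apply_inversePMap, hxy])

theorem bijective_inversePMap :
    Bijective fun y : (A.inversePMap hA).domain => A.inversePMap hA y :=
  (LinearEquiv.ofInjective A hA).symm.bijective

variable {A hA} in
theorem le_inversePMap {T : F →ₗ.[R] E} (hT : ∀ y : T.domain, A (T y) = y) :
    T ≤ A.inversePMap hA :=
  ⟨fun y hy => ⟨T ⟨y, hy⟩, hT ⟨y, hy⟩⟩,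
    fun _ _ hxy => (inversePMap_apply A hA (by rw [hT, hxy])).symm⟩

end InversePMap

variable {𝕜 E : Type*} [RCLike 𝕜] [NormedAddCommGroup E] [InnerProductSpace 𝕜 E] [CompleteSpace E]
  {A : E →ₗ[𝕜] E}

theorem IsSymmetric.dense_range (hsymm : A.IsSymmetric) (hA : Injective A) :
    Dense (range A : Set E) := by
  rw [Submodule.dense_iff_topologicalClosure_eq_top, Submodule.topologicalClosure_eq_top_iff,
    hsymm.orthogonal_range, ker_eq_bot.mpr hA]

theorem IsSymmetric.adjoint_inversePMap (hsymm : A.IsSymmetric) (hA : Injective A) :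
    (A.inversePMap hA).adjoint = A.inversePMap hA := by
  set S := A.inversePMap hA
  have hdense : Dense (S.domain : Set E) := hsymm.dense_range hA
  have hformal : S.IsFormalAdjoint S := fun x y => by
    rw [← apply_inversePMap A hA y, ← hsymm, apply_inversePMap]
  refine le_antisymm (le_inversePMap fun y => ext_inner_right 𝕜 fun f => ?_)
    (hformal.le_adjoint hdense)
  have hAf : A f ∈ S.domain := ⟨f, rfl⟩
  calc ⟪A (S.adjoint y), f⟫_𝕜 = ⟪S.adjoint y, A f⟫_𝕜 := hsymm _ _
    _ = ⟪(y : E), S ⟨A f, hAf⟩⟫_𝕜 := LinearPMap.adjoint_isFormalAdjoint hdense y ⟨A f, hAf⟩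
    _ = ⟪(y : E), f⟫_𝕜 := by rw [inversePMap_apply A hA rfl]

end LinearMap

namespace ContinuousLinearMap

variable {𝕜 E F : Type*} [RCLike 𝕜] [NormedAddCommGroup E] [InnerProductSpace 𝕜 E] [CompleteSpace E]
  [NormedAddCommGroup F] [InnerProductSpace 𝕜 F] [CompleteSpace F]

theorem injective_self_comp_adjoint_of_denseRange {T : E →L[𝕜] F} (hT : DenseRange T) :
    Injective (T ∘L T.adjoint) := by
  rw [coe_comp, self_comp_adjoint_injective_iff, ← coe_coe, ← LinearMap.ker_eq_bot,
    ← orthogonal_range, ← Submodule.topologicalClosure_eq_top_iff,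
    ← Submodule.dense_iff_topologicalClosure_eq_top]
  exact hT

end ContinuousLinearMap

namespace LinearPMap

variable {H : Type*} [NormedAddCommGroup H] [InnerProductSpace ℝ H]

/-- `T.domain` with the energy inner product `⟪T u, v⟫`; its completion, realized inside `H` by
`completionInclusion`, is the form domain `V` of the Friedrichs construction. -/
def EnergySpace (T : H →ₗ.[ℝ] H) (_hT : T.IsFormalAdjoint T)
    (_hpos : ∀ u : T.domain, ‖(u : H)‖ ^ 2 ≤ ⟪T u, (u : H)⟫) : Type _ :=
  T.domain

namespace EnergySpace

variable {T : H →ₗ.[ℝ] H} (hT : T.IsFormalAdjoint T)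
  (hpos : ∀ u : T.domain, ‖(u : H)‖ ^ 2 ≤ ⟪T u, (u : H)⟫)

instance : AddCommGroup (EnergySpace T hT hpos) := inferInstanceAs (AddCommGroup T.domain)
instance : Module ℝ (EnergySpace T hT hpos) := inferInstanceAs (Module ℝ T.domain)

def equiv : T.domain ≃ₗ[ℝ] EnergySpace T hT hpos := LinearEquiv.refl ℝ T.domain

noncomputable instance innerProductCore : InnerProductSpace.Core ℝ (EnergySpace T hT hpos) where
  inner u v := ⟪T ((equiv hT hpos).symm u), ((equiv hT hpos).symm v : H)⟫
  conj_inner_symm u v := by rw [conj_trivial, hT, real_inner_comm]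
  re_inner_nonneg u := (sq_nonneg _).trans (hpos _)
  add_left u v w := by
    rw [LinearEquiv.map_add, LinearPMap.map_add, inner_add_left]
  smul_left u v r := by
    rw [LinearEquiv.map_smul, LinearPMap.map_smul, real_inner_smul_left, conj_trivial]
  definite u hu := by
    have : ‖((equiv hT hpos).symm u : H)‖ ^ 2 ≤ 0 := hu ▸ hpos _
    simpa using this

noncomputable instance : NormedAddCommGroup (EnergySpace T hT hpos) :=
  (innerProductCore hT hpos).toNormedAddCommGroup

noncomputable instance : InnerProductSpace ℝ (EnergySpace T hT hpos) :=
  InnerProductSpace.ofCore _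

theorem inner_equiv (u v : T.domain) :
    ⟪equiv hT hpos u, equiv hT hpos v⟫ = ⟪T u, (v : H)⟫ := rfl

theorem norm_equiv_symm_le (u : EnergySpace T hT hpos) : ‖((equiv hT hpos).symm u : H)‖ ≤ ‖u‖ :=
  (pow_le_pow_iff_left₀ (norm_nonneg _) (norm_nonneg u) two_ne_zero).mp <| by
    rw [← real_inner_self_eq_norm_sq u]
    exact hpos _

noncomputable def inclusion : EnergySpace T hT hpos →L[ℝ] H :=
  LinearMap.mkContinuous (T.domain.subtype ∘ₗ (equiv hT hpos).symm.toLinearMap) 1 fun u => by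
    simpa using norm_equiv_symm_le hT hpos u

variable [CompleteSpace H]

noncomputable def completionInclusion : Completion (EnergySpace T hT hpos) →L[ℝ] H :=
  (inclusion hT hpos).extend Completion.toComplL

theorem completionInclusion_coe (u : EnergySpace T hT hpos) :
    completionInclusion hT hpos u = ((equiv hT hpos).symm u : H) :=
  (inclusion hT hpos).extend_eq Completion.denseRange_coe (Completion.isUniformInducing_coe _) u

theorem denseRange_completionInclusion (hdense : Dense (T.domain : Set H)) :
    DenseRange (completionInclusion hT hpos) :=
  hdense.mono fun x hx => ⟨equiv hT hpos ⟨x, hx⟩, completionInclusion_coe hT hpos _⟩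

theorem adjoint_completionInclusion_apply (u : T.domain) :
    (completionInclusion hT hpos).adjoint (T u) = (equiv hT hpos u : Completion _) :=
  Completion.denseRange_coe.eq_of_inner_left ℝ fun v => by
    rw [ContinuousLinearMap.adjoint_inner_left, completionInclusion_coe, Completion.inner_coe,
      ← inner_equiv, LinearEquiv.apply_symm_apply]

end EnergySpace

end LinearPMap

open LinearPMap.EnergySpace

/-- Friedrichs extension: for a densely defined, symmetric, positive-definite operator
`T₀ : D(T₀) ⊆ H → H` (`⟨T₀u, u⟩ ≥ ‖u‖²` on `D(T₀)`) on a real Hilbert space `H`, there exists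
a self-adjoint extension `S` of `T₀` which is a bijection of `D(S)` onto `H`. -/
theorem friedrichs_extension_exists
    {H : Type*} [NormedAddCommGroup H] [InnerProductSpace ℝ H] [CompleteSpace H]
    (T₀ : H →ₗ.[ℝ] H)
    (hdense : Dense (T₀.domain : Set H))
    (hsymm : ∀ u v : T₀.domain, ⟪T₀ u, (v : H)⟫ = ⟪(u : H), T₀ v⟫)
    (hpos : ∀ u : T₀.domain, ‖(u : H)‖ ^ 2 ≤ ⟪T₀ u, (u : H)⟫) :
    ∃ S : H →ₗ.[ℝ] H, T₀ ≤ S ∧ S.adjoint = S ∧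
      Function.Bijective (fun u : S.domain => S u) := by
  have hT : T₀.IsFormalAdjoint T₀ := hsymm
  set j := completionInclusion hT hpos
  have hinj : Injective (j ∘L j.adjoint) :=
    ContinuousLinearMap.injective_self_comp_adjoint_of_denseRange
      (denseRange_completionInclusion hT hpos hdense)
  have hA : ((j ∘L j.adjoint : H →L[ℝ] H) : H →ₗ[ℝ] H).IsSymmetric :=
    (ContinuousLinearMap.isPositive_self_comp_adjoint j).isSymmetric
  refine ⟨LinearMap.inversePMap _ hinj, LinearMap.le_inversePMap fun u => ?_,
    hA.adjoint_inversePMap hinj, LinearMap.bijective_inversePMap _ hinj⟩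
  simp [j, adjoint_completionInclusion_apply, completionInclusion_coe]
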